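/- arXiv:1208.0570 — 3 statements merged into one kernel-verified Lean document; each statement's English description precedes it below -/
import Mathlib

section
/- Suppose moreover that there is a constant c > 0 such that aᵀG a ≥ c Σ_{φ∈Φ} a_φ² for every a ∈ ℝ^Φ, and that |b_φ − b̄_φ| ≤ d_φ for every φ ∈ Φ. Then for every a ∈ ℝ^Φ one has ‖f_â − f*‖_T² ≤ 3 ‖f_a − f*‖_T² + 32 c⁻¹ Σ_{φ∈S(a)} d_φ². In particular, with the absolute constant C = 32, ‖f_â − f*‖_T² ≤ C · inf_{a∈ℝ^Φ} { ‖f_a − f*‖_T² + c⁻¹ Σ_{φ∈S(a)} d_φ² }. (Abstract, deterministic form of the paper's Theorem 1.) -/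
/-!
Comparing the Lasso criterion at `â` and at a competitor `a`, the term `‖f*‖²` cancels and the
noise `b - b̄` is absorbed by the weights `d`; off the support `S(a)` the penalty even wins, so
`‖f_â - f*‖² - ‖f_a - f*‖² ≤ 4 ∑_{S(a)} d_φ |â_φ - a_φ|`. Cauchy–Schwarz bounds the right side by
`4 (∑_{S(a)} d_φ²)^{1/2} ‖â - a‖₂`, and the Gram lower bound together with the parallelogram law
gives `c ‖â - a‖₂² ≤ ‖f_â - f_a‖² ≤ 2 ‖f_â - f*‖² + 2 ‖f_a - f*‖²`. The resulting quadratic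
inequality in `‖f_â - f*‖²` solves to the oracle bound.
-/

open Finset

namespace LinearMap.BilinForm

variable {H : Type*} [AddCommGroup H] [Module ℝ H] (B : LinearMap.BilinForm ℝ H)

theorem apply_sum_smul_sum_smul {Φ : Type*} (s : Finset Φ) (v : Φ → H) (a : Φ → ℝ) :
    B (∑ φ ∈ s, a φ • v φ) (∑ ρ ∈ s, a ρ • v ρ)
      = ∑ φ ∈ s, ∑ ρ ∈ s, a φ * a ρ * B (v φ) (v ρ) := by
  rw [sum_left]
  refine sum_congr rfl fun φ _ => ?_
  rw [sum_right]
  refine sum_congr rfl fun ρ _ => ?_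
  rw [smul_left, smul_right]
  ring

theorem apply_sub_sub_le_of_isNonneg (hB : B.IsNonneg) (u w : H) :
    B (u - w) (u - w) ≤ 2 * B u u + 2 * B w w := by
  have := hB.nonneg (u + w)
  simp only [add_left, add_right, sub_left, sub_right] at this ⊢
  linarith

theorem apply_sub_sub_of_isSymm (hB : B.IsSymm) (u w : H) :
    B (u - w) (u - w) = B u u - 2 * B u w + B w w := by
  simp only [sub_left, sub_right, hB.eq w u]
  ring

end LinearMap.BilinForm

theorem sub_mul_add_mul_abs_sub_abs_le {e δ x y : ℝ} (he : |e| ≤ δ) :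
    (x - y) * e + δ * (|y| - |x|) ≤ if y ≠ 0 then 2 * (δ * |x - y|) else 0 := by
  have hδ : 0 ≤ δ := (abs_nonneg e).trans he
  have hnoise : (x - y) * e ≤ δ * |x - y| := by
    calc (x - y) * e ≤ |x - y| * |e| := by rw [← abs_mul]; exact le_abs_self _
      _ ≤ δ * |x - y| := by rw [mul_comm]; gcongr
  split_ifs with hy
  · have : |y| - |x| ≤ |x - y| := by
      rw [abs_sub_comm]; exact abs_sub_abs_le_abs_sub y x
    nlinarith
  · push Not at hy
    simp only [hy, sub_zero, abs_zero, zero_sub] at hnoise ⊢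
    linarith

theorem sq_sum_mul_abs_le {Φ : Type*} [Fintype Φ] (s : Finset Φ) (d x : Φ → ℝ) :
    (∑ φ ∈ s, d φ * |x φ|) ^ 2 ≤ (∑ φ ∈ s, d φ ^ 2) * ∑ φ, x φ ^ 2 := by
  calc (∑ φ ∈ s, d φ * |x φ|) ^ 2 ≤ (∑ φ ∈ s, d φ ^ 2) * ∑ φ ∈ s, |x φ| ^ 2 :=
        sum_mul_sq_le_sq_mul_sq s d fun φ => |x φ|
    _ ≤ (∑ φ ∈ s, d φ ^ 2) * ∑ φ, x φ ^ 2 := by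
        simp only [sq_abs]
        gcongr
        exact subset_univ s

theorem le_three_mul_add_of_sub_le_of_mul_sq_le {X Y k c D : ℝ} (hY : 0 ≤ Y) (hD : 0 ≤ D)
    (hc : 0 < c) (hk : X - Y ≤ 4 * k) (hck : c * k ^ 2 ≤ 2 * D * (X + Y)) :
    X ≤ 3 * Y + 32 * c⁻¹ * D := by
  have hE : 0 ≤ 32 * c⁻¹ * D := by positivity
  rcases le_or_gt X Y with hXY | hXY
  · linarith
  have hsq : (X - Y) ^ 2 ≤ 32 * c⁻¹ * D * (X + Y) := by
    have h16 : (X - Y) ^ 2 ≤ 16 * k ^ 2 := by nlinarith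
    have : c * (X - Y) ^ 2 ≤ c * (32 * c⁻¹ * D * (X + Y)) := by
      rw [show c * (32 * c⁻¹ * D * (X + Y)) = 16 * (2 * D * (X + Y)) by field_simp; ring]
      nlinarith
    exact le_of_mul_le_mul_left this hc
  -- if `X > 3Y + E` then `(X - Y)² > (2Y + E)(X - Y) ≥ E(X + Y)`
  nlinarith

section Lasso

variable {Φ H : Type*} [Fintype Φ] [AddCommGroup H] [Module ℝ H]

def lassoCriterion (G : Φ → Φ → ℝ) (b d a : Φ → ℝ) : ℝ :=
  -2 * (∑ φ, a φ * b φ) + (∑ φ, ∑ ρ, a φ * a ρ * G φ ρ) + 2 * (∑ φ, d φ * |a φ|)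

variable (B : LinearMap.BilinForm ℝ H) (v : Φ → H) (fstar : H) (b d : Φ → ℝ)

theorem lassoCriterion_gram_eq (hB : B.IsSymm) (a : Φ → ℝ) :
    lassoCriterion (fun φ ρ => B (v φ) (v ρ)) b d a
      = B ((∑ φ, a φ • v φ) - fstar) ((∑ φ, a φ • v φ) - fstar) - B fstar fstar
        - 2 * ∑ φ, a φ * (b φ - B (v φ) fstar) + 2 * ∑ φ, d φ * |a φ| := by
  rw [lassoCriterion, B.apply_sub_sub_of_isSymm hB, B.apply_sum_smul_sum_smul,
    LinearMap.BilinForm.sum_left]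
  simp only [LinearMap.BilinForm.smul_left, mul_sub, sum_sub_distrib]
  ring

theorem lasso_basic_inequality (hB : B.IsSymm) (hb : ∀ φ, |b φ - B (v φ) fstar| ≤ d φ)
    {ahat a : Φ → ℝ}
    (hmin : lassoCriterion (fun φ ρ => B (v φ) (v ρ)) b d ahat
      ≤ lassoCriterion (fun φ ρ => B (v φ) (v ρ)) b d a) :
    B ((∑ φ, ahat φ • v φ) - fstar) ((∑ φ, ahat φ • v φ) - fstar)
        - B ((∑ φ, a φ • v φ) - fstar) ((∑ φ, a φ • v φ) - fstar)
      ≤ 4 * ∑ φ ∈ univ.filter (fun φ => a φ ≠ 0), d φ * |ahat φ - a φ| := by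
  rw [lassoCriterion_gram_eq B v fstar b d hB, lassoCriterion_gram_eq B v fstar b d hB] at hmin
  calc _ ≤ 2 * ∑ φ, ((ahat φ - a φ) * (b φ - B (v φ) fstar) + d φ * (|a φ| - |ahat φ|)) := by
        have : ∑ φ, ((ahat φ - a φ) * (b φ - B (v φ) fstar) + d φ * (|a φ| - |ahat φ|))
            = ∑ φ, ahat φ * (b φ - B (v φ) fstar) - ∑ φ, a φ * (b φ - B (v φ) fstar)
              + ∑ φ, d φ * |a φ| - ∑ φ, d φ * |ahat φ| := by
          simp only [← sum_sub_distrib, ← sum_add_distrib]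
          exact sum_congr rfl fun _ _ => by ring
        linarith
    _ ≤ 2 * ∑ φ, if a φ ≠ 0 then 2 * (d φ * |ahat φ - a φ|) else 0 := by
        gcongr with φ
        exact sub_mul_add_mul_abs_sub_abs_le (hb φ)
    _ = _ := by rw [← sum_filter, ← mul_sum]; ring

theorem lasso_oracle_inequality (hB : B.IsPosSemidef) {c : ℝ} (hc : 0 < c)
    (hG : ∀ a : Φ → ℝ, c * ∑ φ, a φ ^ 2 ≤ B (∑ φ, a φ • v φ) (∑ φ, a φ • v φ))
    (hb : ∀ φ, |b φ - B (v φ) fstar| ≤ d φ) {ahat : Φ → ℝ}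
    (hmin : ∀ a, lassoCriterion (fun φ ρ => B (v φ) (v ρ)) b d ahat
      ≤ lassoCriterion (fun φ ρ => B (v φ) (v ρ)) b d a) (a : Φ → ℝ) :
    B ((∑ φ, ahat φ • v φ) - fstar) ((∑ φ, ahat φ • v φ) - fstar)
      ≤ 3 * B ((∑ φ, a φ • v φ) - fstar) ((∑ φ, a φ • v φ) - fstar)
        + 32 * c⁻¹ * ∑ φ ∈ univ.filter (fun φ => a φ ≠ 0), d φ ^ 2 := by
  set X := B ((∑ φ, ahat φ • v φ) - fstar) ((∑ φ, ahat φ • v φ) - fstar)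
  set Y := B ((∑ φ, a φ • v φ) - fstar) ((∑ φ, a φ • v φ) - fstar)
  set D := ∑ φ ∈ univ.filter (fun φ => a φ ≠ 0), d φ ^ 2
  have hD : 0 ≤ D := sum_nonneg fun _ _ => sq_nonneg _
  have hcs := sq_sum_mul_abs_le (univ.filter fun φ => a φ ≠ 0) d fun φ => ahat φ - a φ
  have hgram : c * ∑ φ, (ahat φ - a φ) ^ 2 ≤ 2 * X + 2 * Y :=
    calc c * ∑ φ, (ahat φ - a φ) ^ 2
        ≤ B (∑ φ, (ahat φ - a φ) • v φ) (∑ φ, (ahat φ - a φ) • v φ) := hG _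
      _ = B ((∑ φ, ahat φ • v φ - fstar) - (∑ φ, a φ • v φ - fstar))
            ((∑ φ, ahat φ • v φ - fstar) - (∑ φ, a φ • v φ - fstar)) := by
          simp only [sub_smul, sum_sub_distrib, sub_sub_sub_cancel_right]
      _ ≤ 2 * X + 2 * Y := B.apply_sub_sub_le_of_isNonneg hB.isNonneg _ _
  refine le_three_mul_add_of_sub_le_of_mul_sq_le (hB.isNonneg.nonneg _) hD hc
    (lasso_basic_inequality B v fstar b d hB.isSymm hb (hmin a)) ?_
  calc c * (∑ φ ∈ univ.filter (fun φ => a φ ≠ 0), d φ * |ahat φ - a φ|) ^ 2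
      ≤ c * (D * ∑ φ, (ahat φ - a φ) ^ 2) := by gcongr
    _ = D * (c * ∑ φ, (ahat φ - a φ) ^ 2) := by ring
    _ ≤ D * (2 * X + 2 * Y) := by gcongr
    _ = 2 * D * (X + Y) := by ring

end Lasso

theorem stmt_0_general {Φ : Type*} [Fintype Φ] {H : Type*} [AddCommGroup H] [Module ℝ H]
    (B : H → H → ℝ)
    (hB_symm : ∀ f g, B f g = B g f)
    (hB_add_left : ∀ f g h, B (f + g) h = B f h + B g h)
    (hB_smul_left : ∀ (c : ℝ) (f g : H), B (c • f) g = c * B f g)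
    (hB_psd : ∀ f, 0 ≤ B f f)
    (dict : Φ → H) (fstar : H) (b : Φ → ℝ) (d : Φ → ℝ)
    (ahat : Φ → ℝ)
    (hahat : ∀ a : Φ → ℝ,
      -2 * (∑ φ, ahat φ * b φ)
          + (∑ φ, ∑ ρ, ahat φ * ahat ρ * B (dict φ) (dict ρ))
          + 2 * (∑ φ, d φ * |ahat φ|)
        ≤ -2 * (∑ φ, a φ * b φ)
          + (∑ φ, ∑ ρ, a φ * a ρ * B (dict φ) (dict ρ))
          + 2 * (∑ φ, d φ * |a φ|))
    (c : ℝ) (hc : 0 < c)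
    (hG : ∀ a : Φ → ℝ,
      c * ∑ φ, (a φ) ^ 2 ≤ ∑ φ, ∑ ρ, a φ * a ρ * B (dict φ) (dict ρ))
    (hb : ∀ φ, |b φ - B (dict φ) fstar| ≤ d φ) :
    (∀ a : Φ → ℝ,
      B ((∑ φ, ahat φ • dict φ) - fstar) ((∑ φ, ahat φ • dict φ) - fstar)
        ≤ 3 * B ((∑ φ, a φ • dict φ) - fstar) ((∑ φ, a φ • dict φ) - fstar)
          + 32 * c⁻¹ * ∑ φ ∈ univ.filter (fun φ => a φ ≠ 0), (d φ) ^ 2)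
    ∧ B ((∑ φ, ahat φ • dict φ) - fstar) ((∑ φ, ahat φ • dict φ) - fstar)
        ≤ 32 * ⨅ a : Φ → ℝ,
            (B ((∑ φ, a φ • dict φ) - fstar) ((∑ φ, a φ • dict φ) - fstar)
              + c⁻¹ * ∑ φ ∈ univ.filter (fun φ => a φ ≠ 0), (d φ) ^ 2) := by
  let Bf : LinearMap.BilinForm ℝ H := LinearMap.mk₂ ℝ B hB_add_left hB_smul_left
    (fun f g h => by rw [hB_symm, hB_add_left, hB_symm g, hB_symm h])
    (fun c f g => by rw [smul_eq_mul, hB_symm, hB_smul_left, hB_symm g])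
  have hBf : Bf.IsPosSemidef := ⟨⟨hB_symm⟩, ⟨hB_psd⟩⟩
  have oracle := lasso_oracle_inequality Bf dict fstar b d hBf hc
    (fun a => (Bf.apply_sum_smul_sum_smul univ dict a).symm ▸ hG a) hb hahat
  simp only [Bf, LinearMap.mk₂_apply] at oracle
  refine ⟨oracle, ?_⟩
  rw [← div_le_iff₀' (by norm_num)]
  exact le_ciInf fun a => by linarith [oracle a, hB_psd ((∑ φ, a φ • dict φ) - fstar)]

/-- Abstract deterministic oracle inequality (Theorem 1): if the Gram matrix
satisfies `aᵀ G a ≥ c ∑ a_φ²` and `|b_φ − b̄_φ| ≤ d_φ`, then any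
`ℓ¹`-penalized minimizer `â` satisfies, for every `a`,
`‖f_â − f*‖_T² ≤ 3 ‖f_a − f*‖_T² + 32 c⁻¹ ∑_{φ ∈ S(a)} d_φ²`,
and in particular, with `C = 32`,
`‖f_â − f*‖_T² ≤ C inf_a { ‖f_a − f*‖_T² + c⁻¹ ∑_{φ ∈ S(a)} d_φ² }`. -/
theorem stmt_0 {Φ : Type*} [Fintype Φ] {H : Type*} [AddCommGroup H] [Module ℝ H]
    (B : H → H → ℝ)
    (hB_symm : ∀ f g, B f g = B g f)
    (hB_add_left : ∀ f g h, B (f + g) h = B f h + B g h)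
    (hB_smul_left : ∀ (c : ℝ) (f g : H), B (c • f) g = c * B f g)
    (hB_psd : ∀ f, 0 ≤ B f f)
    (dict : Φ → H) (fstar : H) (b : Φ → ℝ) (d : Φ → ℝ) (hd : ∀ φ, 0 ≤ d φ)
    (ahat : Φ → ℝ)
    (hahat : ∀ a : Φ → ℝ,
      -2 * (∑ φ, ahat φ * b φ)
          + (∑ φ, ∑ ρ, ahat φ * ahat ρ * B (dict φ) (dict ρ))
          + 2 * (∑ φ, d φ * |ahat φ|)
        ≤ -2 * (∑ φ, a φ * b φ)
          + (∑ φ, ∑ ρ, a φ * a ρ * B (dict φ) (dict ρ))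
          + 2 * (∑ φ, d φ * |a φ|))
    (c : ℝ) (hc : 0 < c)
    (hG : ∀ a : Φ → ℝ,
      c * ∑ φ, (a φ) ^ 2 ≤ ∑ φ, ∑ ρ, a φ * a ρ * B (dict φ) (dict ρ))
    (hb : ∀ φ, |b φ - B (dict φ) fstar| ≤ d φ) :
    (∀ a : Φ → ℝ,
      B ((∑ φ, ahat φ • dict φ) - fstar) ((∑ φ, ahat φ • dict φ) - fstar)
        ≤ 3 * B ((∑ φ, a φ • dict φ) - fstar) ((∑ φ, a φ • dict φ) - fstar)
          + 32 * c⁻¹ * ∑ φ ∈ univ.filter (fun φ => a φ ≠ 0), (d φ) ^ 2)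
    ∧ B ((∑ φ, ahat φ • dict φ) - fstar) ((∑ φ, ahat φ • dict φ) - fstar)
        ≤ 32 * ⨅ a : Φ → ℝ,
            (B ((∑ φ, a φ • dict φ) - fstar) ((∑ φ, a φ • dict φ) - fstar)
              + c⁻¹ * ∑ φ ∈ univ.filter (fun φ => a φ ≠ 0), (d φ) ^ 2) :=
  stmt_0_general B hB_symm hB_add_left hB_smul_left hB_psd dict fstar b d ahat hahat c hc hG hb
end

section
/- Assume only that |b_φ − b̄_φ| ≤ d_φ for every φ ∈ Φ (no condition on the Gram matrix G). Then for every a ∈ ℝ^Φ, ‖f_â − f*‖_T² ≤ ‖f_a − f*‖_T² + 4 Σ_{φ∈S(a)} d_φ |a_φ − â_φ|. (The 'basic inequality' established in the proof of the paper's Theorem 1.) -/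
/-!
Expanding the seminorm, `‖f_c − f*‖_T²` is the quadratic part `cᵀGc` of the Lasso criterion
minus `2 ∑ c_φ b̄_φ`, plus the constant `‖f*‖_T²`. Comparing the criterion at `â` and at `a`
therefore bounds `‖f_â − f*‖_T² − ‖f_a − f*‖_T²` by
`∑_φ 2 (â_φ − a_φ)(b_φ − b̄_φ) + 2 d_φ (|a_φ| − |â_φ|)`. Since `|b_φ − b̄_φ| ≤ d_φ`, each term is
at most `4 d_φ |a_φ − â_φ|`, and at most `0` when `a_φ = 0`.
-/

open Finset

namespace LinearMap.BilinForm

variable {R M ι : Type*} [CommRing R] [AddCommGroup M] [Module R M]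

def ofSymmOfLinearLeft (B : M → M → R) (hB_symm : ∀ f g, B f g = B g f)
    (hB_add_left : ∀ f g h, B (f + g) h = B f h + B g h)
    (hB_smul_left : ∀ (c : R) (f g : M), B (c • f) g = c * B f g) : LinearMap.BilinForm R M :=
  LinearMap.mk₂ R B hB_add_left hB_smul_left
    (fun f g h => by rw [hB_symm, hB_add_left, hB_symm g, hB_symm h])
    (fun c f g => by rw [hB_symm, hB_smul_left, hB_symm]; rfl)

theorem IsSymm.apply_sub_sub {β : LinearMap.BilinForm R M} (hβ : β.IsSymm) (x f : M) :
    β (x - f) (x - f) = β x x - 2 * β x f + β f f := by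
  simp only [map_sub, LinearMap.sub_apply, hβ.eq f x]
  ring

theorem IsSymm.apply_sum_smul_sub_sum_smul_sub [Fintype ι] {β : LinearMap.BilinForm R M}
    (hβ : β.IsSymm) (c : ι → R) (v : ι → M) (f : M) :
    β ((∑ i, c i • v i) - f) ((∑ i, c i • v i) - f)
      = (∑ i, ∑ j, c i * c j * β (v i) (v j)) - 2 * (∑ i, c i * β (v i) f) + β f f := by
  simp only [hβ.apply_sub_sub, map_sum, map_smul, LinearMap.sum_apply, LinearMap.smul_apply,
    smul_eq_mul, Finset.mul_sum, mul_assoc]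
  rw [Finset.sum_comm]
  congr 2
  exact Finset.sum_congr rfl fun _ _ => Finset.sum_congr rfl fun _ _ => mul_left_comm _ _ _

end LinearMap.BilinForm

theorem lasso_term_le {x y e d : ℝ} (he : |e| ≤ d) :
    2 * (y - x) * e + 2 * d * (|x| - |y|) ≤ if x ≠ 0 then 4 * (d * |x - y|) else 0 := by
  have hcross : (y - x) * e ≤ |x - y| * d := by
    calc (y - x) * e ≤ |(y - x) * e| := le_abs_self _
      _ = |x - y| * |e| := by rw [abs_mul, abs_sub_comm]
      _ ≤ |x - y| * d := mul_le_mul_of_nonneg_left he (abs_nonneg _)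
  split_ifs with hx
  · have hd : 0 ≤ d := (abs_nonneg e).trans he
    have hpen : d * (|x| - |y|) ≤ d * |x - y| :=
      mul_le_mul_of_nonneg_left (abs_sub_abs_le_abs_sub x y) hd
    linarith
  · rw [not_ne_iff] at hx
    subst hx
    simp only [zero_sub, abs_neg, abs_zero] at hcross ⊢
    linarith

theorem sum_lasso_terms_le {ι : Type*} [Fintype ι] {x y e d : ι → ℝ} (he : ∀ i, |e i| ≤ d i) :
    ∑ i, (2 * (y i - x i) * e i + 2 * d i * (|x i| - |y i|))
      ≤ 4 * ∑ i ∈ univ.filter (fun i => x i ≠ 0), d i * |x i - y i| := by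
  rw [Finset.mul_sum, Finset.sum_filter]
  exact Finset.sum_le_sum fun i _ => lasso_term_le (he i)

theorem stmt_1_general {Φ : Type*} [Fintype Φ] {H : Type*} [AddCommGroup H] [Module ℝ H]
    (B : H → H → ℝ)
    (hB_symm : ∀ f g, B f g = B g f)
    (hB_add_left : ∀ f g h, B (f + g) h = B f h + B g h)
    (hB_smul_left : ∀ (c : ℝ) (f g : H), B (c • f) g = c * B f g)
    (dict : Φ → H) (fstar : H) (b : Φ → ℝ) (d : Φ → ℝ)
    (ahat : Φ → ℝ)
    (hahat : ∀ a : Φ → ℝ,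
      -2 * (∑ φ, ahat φ * b φ)
          + (∑ φ, ∑ ρ, ahat φ * ahat ρ * B (dict φ) (dict ρ))
          + 2 * (∑ φ, d φ * |ahat φ|)
        ≤ -2 * (∑ φ, a φ * b φ)
          + (∑ φ, ∑ ρ, a φ * a ρ * B (dict φ) (dict ρ))
          + 2 * (∑ φ, d φ * |a φ|))
    (hb : ∀ φ, |b φ - B (dict φ) fstar| ≤ d φ) :
    ∀ a : Φ → ℝ,
      B ((∑ φ, ahat φ • dict φ) - fstar) ((∑ φ, ahat φ • dict φ) - fstar)
        ≤ B ((∑ φ, a φ • dict φ) - fstar) ((∑ φ, a φ • dict φ) - fstar)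
          + 4 * ∑ φ ∈ univ.filter (fun φ => a φ ≠ 0), d φ * |a φ - ahat φ| := by
  intro a
  let β := LinearMap.BilinForm.ofSymmOfLinearLeft B hB_symm hB_add_left hB_smul_left
  have hβ : β.IsSymm := ⟨hB_symm⟩
  have hexpand : ∀ c : Φ → ℝ, B ((∑ φ, c φ • dict φ) - fstar) ((∑ φ, c φ • dict φ) - fstar)
      = (∑ φ, ∑ ρ, c φ * c ρ * B (dict φ) (dict ρ)) - 2 * (∑ φ, c φ * B (dict φ) fstar)
        + B fstar fstar :=
    hβ.apply_sum_smul_sub_sum_smul_sub (v := dict) (f := fstar)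
  have hterms :=
    sum_lasso_terms_le (x := a) (y := ahat) (e := fun φ => b φ - B (dict φ) fstar) hb
  have hsplit :
      ∑ φ, (2 * (ahat φ - a φ) * (b φ - B (dict φ) fstar) + 2 * d φ * (|a φ| - |ahat φ|))
      = 2 * (∑ φ, ahat φ * b φ) - 2 * (∑ φ, a φ * b φ) + 2 * (∑ φ, d φ * |a φ|)
        - 2 * (∑ φ, d φ * |ahat φ|) - 2 * (∑ φ, ahat φ * B (dict φ) fstar)
        + 2 * (∑ φ, a φ * B (dict φ) fstar) := by
    simp only [Finset.mul_sum, ← Finset.sum_sub_distrib, ← Finset.sum_add_distrib]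
    exact Finset.sum_congr rfl fun φ _ => by ring
  rw [hexpand, hexpand]
  linarith [hahat a]

/-- Basic Lasso inequality: with `B` a symmetric positive semidefinite bilinear
form with associated squared seminorm `‖f‖_T² = B f f`, dictionary `dict`,
target `fstar`, `b̄_φ = B (dict φ) fstar`, weights `d_φ ≥ 0` and `b_φ` satisfying
`|b_φ − b̄_φ| ≤ d_φ`, any minimizer `â` of the `ℓ¹`-penalized criterion satisfies,
for every `a`,
`‖f_â − f*‖_T² ≤ ‖f_a − f*‖_T² + 4 ∑_{φ ∈ S(a)} d_φ |a_φ − â_φ|`. -/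
theorem stmt_1 {Φ : Type*} [Fintype Φ] {H : Type*} [AddCommGroup H] [Module ℝ H]
    (B : H → H → ℝ)
    (hB_symm : ∀ f g, B f g = B g f)
    (hB_add_left : ∀ f g h, B (f + g) h = B f h + B g h)
    (hB_smul_left : ∀ (c : ℝ) (f g : H), B (c • f) g = c * B f g)
    (hB_psd : ∀ f, 0 ≤ B f f)
    (dict : Φ → H) (fstar : H) (b : Φ → ℝ) (d : Φ → ℝ) (hd : ∀ φ, 0 ≤ d φ)
    (ahat : Φ → ℝ)
    (hahat : ∀ a : Φ → ℝ,
      -2 * (∑ φ, ahat φ * b φ)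
          + (∑ φ, ∑ ρ, ahat φ * ahat ρ * B (dict φ) (dict ρ))
          + 2 * (∑ φ, d φ * |ahat φ|)
        ≤ -2 * (∑ φ, a φ * b φ)
          + (∑ φ, ∑ ρ, a φ * a ρ * B (dict φ) (dict ρ))
          + 2 * (∑ φ, d φ * |a φ|))
    (hb : ∀ φ, |b φ - B (dict φ) fstar| ≤ d φ) :
    ∀ a : Φ → ℝ,
      B ((∑ φ, ahat φ • dict φ) - fstar) ((∑ φ, ahat φ • dict φ) - fstar)
        ≤ B ((∑ φ, a φ • dict φ) - fstar) ((∑ φ, a φ • dict φ) - fstar)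
          + 4 * ∑ φ ∈ univ.filter (fun φ => a φ ≠ 0), d φ * |a φ - ahat φ| :=
  stmt_1_general B hB_symm hB_add_left hB_smul_left dict fstar b d ahat hahat hb
end

section
/- Suppose that for every deterministic u > 0 one has P( X ≥ √(2 u x) + B x / 3 and V ≤ u ) ≤ e^{−x}. Then for every ε > 0 and every pair of constants 0 < w ≤ v, P( X ≥ √(2 (1+ε) V x) + B x / 3 and w ≤ V ≤ v ) ≤ ( log(v/w)/log(1+ε) + 1 ) e^{−x}. (The peeling argument underlying the paper's Theorem 3, which replaces a deterministic variance bound by the random, observable quantity V inside the deviation bound.) -/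
open MeasureTheory

/-!
Peeling: cut the range `w ≤ V ≤ v` into the geometric slices `w aᵏ ≤ V < w aᵏ⁺¹` with `a = 1 + ε`.
On the `k`-th slice the deterministic level `u = w aᵏ⁺¹` satisfies `V ≤ u ≤ a V`, so the event with
the random variance `a V` is contained in the event with the deterministic bound `u`, of probability
at most `e^{-x}`. There are `⌊log_a (v / w)⌋ + 1` slices, and a union bound finishes the proof.
-/

open Real

lemma exists_pow_le_lt_pow_succ {a s : ℝ} (ha : 1 < a) (hs : 1 ≤ s) :
    ∃ k : ℕ, (k : ℝ) ≤ logb a s ∧ a ^ k ≤ s ∧ s < a ^ (k + 1) := by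
  have hs0 : 0 < s := one_pos.trans_le hs
  have hlog : 0 ≤ logb a s := logb_nonneg ha hs
  refine ⟨⌊logb a s⌋₊, Nat.floor_le hlog, ?_, ?_⟩
  · rw [← rpow_natCast, ← le_logb_iff_rpow_le ha hs0]
    exact Nat.floor_le hlog
  · rw [← rpow_natCast, ← logb_lt_iff_lt_rpow ha hs0, Nat.cast_add_one]
    exact Nat.lt_floor_add_one _

theorem measure_le_of_peeling {Ω : Type*} [MeasurableSpace Ω] (μ : Measure Ω) (V : Ω → ℝ)
    (F : ℝ → Set Ω) {c : ENNReal} (hF : ∀ u, 0 < u → μ (F u) ≤ c) {a w v : ℝ} (ha : 1 < a)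
    (hw : 0 < w) {S : Set Ω}
    (hS : ∀ ω ∈ S, w ≤ V ω ∧ V ω ≤ v ∧ ∀ u, V ω ≤ u → u ≤ a * V ω → ω ∈ F u) :
    μ S ≤ (⌊logb a (v / w)⌋₊ + 1 : ℕ) * c := by
  set n := ⌊logb a (v / w)⌋₊
  have hcover : S ⊆ ⋃ k ∈ Finset.range (n + 1), F (w * a ^ (k + 1)) := by
    intro ω hω
    obtain ⟨hwV, hVv, hmem⟩ := hS ω hω
    obtain ⟨k, hk, hlow, hup⟩ :=
      exists_pow_le_lt_pow_succ ha ((one_le_div hw).2 hwV)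
    have hkn : k ≤ n := Nat.le_floor <| hk.trans <|
      logb_le_logb_of_le ha (div_pos (hw.trans_le hwV) hw) (by gcongr)
    refine Set.mem_biUnion (Finset.mem_range_succ_iff.2 hkn) (hmem _ ?_ ?_)
    · exact ((div_lt_iff₀' hw).1 hup).le
    · rw [pow_succ, ← mul_assoc, mul_comm _ a]
      exact mul_le_mul_of_nonneg_left ((le_div_iff₀' hw).1 hlow) (by linarith)
  calc μ S ≤ ∑ k ∈ Finset.range (n + 1), μ (F (w * a ^ (k + 1))) :=
        (measure_mono hcover).trans (measure_biUnion_finset_le _ _)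
    _ ≤ ∑ _k ∈ Finset.range (n + 1), c :=
        Finset.sum_le_sum fun k _ => hF _ (by positivity)
    _ = (n + 1 : ℕ) * c := by rw [Finset.sum_const, Finset.card_range, nsmul_eq_mul]

theorem stmt_2_general {Ω : Type*} [MeasurableSpace Ω] (P : Measure Ω)
    (X V : Ω → ℝ)
    (x : ℝ) (hx : 0 < x) (B : ℝ)
    (h : ∀ u : ℝ, 0 < u →
      P {ω | Real.sqrt (2 * u * x) + B * x / 3 ≤ X ω ∧ V ω ≤ u}
        ≤ ENNReal.ofReal (Real.exp (-x))) :
    ∀ ε : ℝ, 0 < ε → ∀ w v : ℝ, 0 < w → w ≤ v →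
      P {ω | Real.sqrt (2 * (1 + ε) * V ω * x) + B * x / 3 ≤ X ω
              ∧ w ≤ V ω ∧ V ω ≤ v}
        ≤ ENNReal.ofReal
            ((Real.log (v / w) / Real.log (1 + ε) + 1) * Real.exp (-x)) := by
  intro ε hε w v hw hwv
  have ha : 1 < 1 + ε := by linarith
  have hpeel := measure_le_of_peeling P V _ h ha hw
    (S := {ω | Real.sqrt (2 * (1 + ε) * V ω * x) + B * x / 3 ≤ X ω ∧ w ≤ V ω ∧ V ω ≤ v})
    fun ω ⟨hXω, hwV, hVv⟩ => ⟨hwV, hVv, fun u hVu hua =>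
      ⟨le_trans (add_le_add_left (sqrt_le_sqrt (by nlinarith)) _) hXω, hVu⟩⟩
  have hlogb : 0 ≤ logb (1 + ε) (v / w) := logb_nonneg ha ((one_le_div hw).2 hwv)
  refine hpeel.trans ?_
  rw [log_div_log, ENNReal.ofReal_mul (by positivity), ← ENNReal.ofReal_natCast]
  gcongr
  push_cast
  linarith [Nat.floor_le hlogb]

/-- Peeling argument (underlying Theorem 3): if for every deterministic `u > 0`
`P(X ≥ √(2 u x) + B x/3 ∧ V ≤ u) ≤ e^{−x}`, then for every `ε > 0` and
`0 < w ≤ v`,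
`P(X ≥ √(2 (1+ε) V x) + B x/3 ∧ w ≤ V ≤ v) ≤ (log(v/w)/log(1+ε) + 1) e^{−x}`. -/
theorem stmt_2 {Ω : Type*} [MeasurableSpace Ω] (P : Measure Ω) [IsProbabilityMeasure P]
    (X V : Ω → ℝ) (hX : Measurable X) (hV : Measurable V)
    (x : ℝ) (hx : 0 < x) (B : ℝ) (hB : 0 ≤ B)
    (h : ∀ u : ℝ, 0 < u →
      P {ω | Real.sqrt (2 * u * x) + B * x / 3 ≤ X ω ∧ V ω ≤ u}
        ≤ ENNReal.ofReal (Real.exp (-x))) :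
    ∀ ε : ℝ, 0 < ε → ∀ w v : ℝ, 0 < w → w ≤ v →
      P {ω | Real.sqrt (2 * (1 + ε) * V ω * x) + B * x / 3 ≤ X ω
              ∧ w ≤ V ω ∧ V ω ≤ v}
        ≤ ENNReal.ofReal
            ((Real.log (v / w) / Real.log (1 + ε) + 1) * Real.exp (-x)) :=
  stmt_2_general P X V x hx B h
end
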